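/- Let σ ≤ τ in the consecutive pattern poset 𝒫. The interval [σ,τ] contains a non-trivial disconnected subinterval if and only if there exists π with σ ≤ π ≤ τ having two adjacent occurrences in τ whose starting positions differ by at least 3. Moreover, in that case, if the two adjacent occurrences start at positions a < b with b − a ≥ 3, then the subinterval [π, τ[a, b+|π|−1]] is disconnected. -/

import Mathlib

open scoped Classical

noncomputable section

/-- A permutation of length `n`, written in one-line notation as `τ 0, τ 1, …, τ (n-1)`. -/
abbrev Perm' (n : ℕ) := Equiv.Perm (Fin n)

/-- `σ` occurs in `τ` as a consecutive pattern at (0-indexed) starting position `i`: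
the window `τ i, …, τ (i+m-1)` of adjacent entries is in the same relative order as `σ`. -/
def OccursAt {m n : ℕ} (σ : Perm' m) (τ : Perm' n) (i : ℕ) : Prop :=
  ∃ h : i + m ≤ n, ∀ a b : Fin m,
    σ a < σ b ↔
      τ ⟨i + a, by have := a.isLt; omega⟩ < τ ⟨i + b, by have := b.isLt; omega⟩

/-- Consecutive pattern containment `σ ≤ τ`. -/
def PattLE {m n : ℕ} (σ : Perm' m) (τ : Perm' n) : Prop :=
  ∃ i, OccursAt σ τ i

/-- Permutations of arbitrary length: the carrier of the consecutive pattern poset. -/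
abbrev PermS : Type := Σ n : ℕ, Perm' n

/-- The order of the consecutive pattern poset. -/
def pLE (p q : PermS) : Prop := PattLE p.2 q.2

/-- The strict order of the consecutive pattern poset. -/
def pLT (p q : PermS) : Prop := pLE p q ∧ p ≠ q

/-- The covering relation of the consecutive pattern poset. -/
def pCovBy (p q : PermS) : Prop :=
  pLT p q ∧ ∀ r : PermS, pLT p r → pLT r q → False

/-- The open interval `(p,q)` in the consecutive pattern poset. -/
def openInterval (p q : PermS) : Set PermS := {r | pLT p r ∧ pLT r q}

/-- The Hasse diagram of the open interval `(p,q)`: vertices are the permutations strictly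
between `p` and `q`, edges are the covering relations of the consecutive pattern poset. -/
def hasse (p q : PermS) : SimpleGraph (openInterval p q) :=
  SimpleGraph.fromRel fun a b => pCovBy a.1 b.1

/-- The interval `[p,q]` is disconnected if the Hasse diagram of `(p,q)` is not connected. -/
def IntervalDisconnected (p q : PermS) : Prop := ¬ (hasse p q).Connected

/-- `window τ i m` is the reduction of the window of `τ` of length `m` starting at
(0-indexed) position `i`, i.e. the pattern `τ[i+1, i+m]` in 1-indexed notation. -/
def window {n : ℕ} (τ : Perm' n) (i m : ℕ) : Perm' m :=
  if h : i + m ≤ n then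
    (Tuple.sort fun a : Fin m => τ ⟨i + a, by have := a.isLt; omega⟩)⁻¹
  else 1

/-- `τ` is monotone, i.e. equal to `12…n` or `n…21`. -/
def IsMonotone {n : ℕ} (τ : Perm' n) : Prop :=
  (∀ a b : Fin n, a ≤ b → τ a ≤ τ b) ∨ (∀ a b : Fin n, a ≤ b → τ b ≤ τ a)

/-- `τ` has a bifix (a common proper prefix and proper suffix) of length `k`. -/
def HasBifixLen {n : ℕ} (τ : Perm' n) (k : ℕ) : Prop :=
  0 < k ∧ k < n ∧ window τ 0 k = window τ (n - k) k

/-- The length `|x(τ)|` of the exterior of `τ`, the longest bifix of `τ`. -/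
def extLen {n : ℕ} (τ : Perm' n) : ℕ := Nat.findGreatest (HasBifixLen τ) n

/-- The exterior `x(τ)` of `τ`: its longest bifix. -/
def extPerm {n : ℕ} (τ : Perm' n) : Perm' (extLen τ) := window τ 0 (extLen τ)

/-- The interior `i(τ) = τ[2,n-1]` of `τ`. -/
def intPerm {n : ℕ} (τ : Perm' n) : Perm' (n - 2) := window τ 1 (n - 2)

/-- `p` straddles `q`: `p < q`, `p` is both a prefix and a suffix of `q`,
and `p` has no other occurrence in `q`. -/
def Straddles (p q : PermS) : Prop :=
  pLT p q ∧ OccursAt p.2 q.2 0 ∧ OccursAt p.2 q.2 (q.1 - p.1) ∧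
    ∀ i, OccursAt p.2 q.2 i → i = 0 ∨ i = q.1 - p.1

/-- The interval `[p,q]` contains a non-trivial disconnected subinterval, i.e. a
subinterval `[a,b]` of rank at least 3 which is disconnected. -/
def HasNontrivDisconSub (p q : PermS) : Prop :=
  ∃ a b : PermS, pLE p a ∧ pLE a b ∧ pLE b q ∧ a.1 + 3 ≤ b.1 ∧ IntervalDisconnected a b

/-- The finite set of all permutations of length at most `N`. -/
def permsUpTo (N : ℕ) : Finset PermS :=
  (Finset.range (N + 1)).sigma fun n => (Finset.univ : Finset (Perm' n))

/-- The closed interval `[p,q]` of the consecutive pattern poset, as a finite set. -/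
def intervalF (p q : PermS) : Finset PermS :=
  (permsUpTo q.1).filter fun r => pLE p r ∧ pLE r q

/-- The number of elements of the interval `[σ,τ]` of rank `r`, i.e. of length `|σ| + r`. -/
def rankCard {m n : ℕ} (σ : Perm' m) (τ : Perm' n) (r : ℕ) : ℕ :=
  ((permsUpTo n).filter fun p => pLE ⟨m, σ⟩ p ∧ pLE p ⟨n, τ⟩ ∧ p.1 = m + r).card

/-- The direct sum `σ ⊕ π` of two permutations. -/
def dsum {m k : ℕ} (σ : Perm' m) (π : Perm' k) : Perm' (m + k) :=
  finSumFinEquiv.permCongr (σ.sumCongr π)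

/-!
The heart of the matter is that for `|α| + 3 ≤ |β|` the interval `[α, β]` is disconnected
exactly when `α` straddles `β`.

Every element of the open interval `(α, β)` is a window of `β` containing an occurrence of `α`,
and growing a window by one entry at a time is a path in the Hasse diagram. So every element is
joined to `β` minus its last entry or to `β` minus its first entry. If `α` occurs away from both
ends of `β`, these two coatoms are joined through `β` minus both ends; if all occurrences of `α`
are at the start (end) of `β`, every element is a prefix (suffix) and is joined to the first
(second) coatom. Conversely, if `α` straddles `β`, every element of `(α, β)` occurs in `β` as a
prefix or as a suffix but not both, and comparable elements lie on the same side, so the prefix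
and the suffix of length `|α| + 1` lie in different components.

Finally, two adjacent occurrences of `π` at `a < b` in `τ` say precisely that `π` straddles the
window `τ[a, b + |π| - 1]`.
-/

lemma SimpleGraph.Reachable.iff_of_forall_adj {V : Type*} {G : SimpleGraph V} {P : V → Prop}
    (hP : ∀ u v, G.Adj u v → (P u ↔ P v)) {u v : V} (h : G.Reachable u v) : P u ↔ P v := by
  obtain ⟨w⟩ := h
  induction w with
  | nil => rfl
  | cons huv _ ih => exact (hP _ _ huv).trans ih

lemma perm_eq_of_lt_iff_lt {m : ℕ} {σ σ' : Perm' m} (h : ∀ a b, σ a < σ b ↔ σ' a < σ' b) :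
    σ = σ' := by
  have hmono : StrictMono (σ' ∘ σ.symm) := fun x y hxy =>
    by simpa using (h (σ.symm x) (σ.symm y)).1 (by simpa using hxy)
  have hid := congrArg (⇑) (Subsingleton.elim
    (hmono.orderIsoOfSurjective _ (σ'.surjective.comp σ.symm.surjective)) (OrderIso.refl _))
  ext x
  simpa using congrArg Fin.val (congrFun hid (σ x)).symm

lemma occursAt_self {m : ℕ} (σ : Perm' m) : OccursAt σ σ 0 :=
  ⟨(zero_add m).le, fun a b => by simp⟩

lemma OccursAt.trans {k m n : ℕ} {π : Perm' k} {ρ : Perm' m} {τ : Perm' n} {p i : ℕ}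
    (h₁ : OccursAt π ρ p) (h₂ : OccursAt ρ τ i) : OccursAt π τ (i + p) := by
  obtain ⟨hb₁, hf₁⟩ := h₁
  obtain ⟨hb₂, hf₂⟩ := h₂
  refine ⟨by omega, fun a b => (hf₁ a b).trans ?_⟩
  simpa only [add_assoc] using hf₂ ⟨p + a, by omega⟩ ⟨p + b, by omega⟩

lemma OccursAt.sub_of_le {k m n : ℕ} {μ : Perm' k} {ρ : Perm' m} {τ : Perm' n} {i j : ℕ}
    (hρ : OccursAt ρ τ i) (hμ : OccursAt μ τ j) (hij : i ≤ j) (hjk : j + k ≤ i + m) :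
    OccursAt μ ρ (j - i) := by
  obtain ⟨hbρ, hfρ⟩ := hρ
  obtain ⟨hbμ, hfμ⟩ := hμ
  refine ⟨by omega, fun a b => (hfμ a b).trans ?_⟩
  rw [hfρ]
  simp only [← add_assoc, Nat.add_sub_cancel' hij]

lemma OccursAt.eq_of_occursAt {m n : ℕ} {σ σ' : Perm' m} {τ : Perm' n} {i : ℕ}
    (h : OccursAt σ τ i) (h' : OccursAt σ' τ i) : σ = σ' :=
  perm_eq_of_lt_iff_lt fun a b => (h.2 a b).trans (h'.2 a b).symm

lemma window_occursAt {n i m : ℕ} (τ : Perm' n) (h : i + m ≤ n) :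
    OccursAt (window τ i m) τ i := by
  refine ⟨h, fun a b => ?_⟩
  let f : Fin m → Fin n := fun a => τ ⟨i + a, by omega⟩
  have hf : Function.Injective f := fun x y hxy => by
    simpa [f, Fin.ext_iff] using hxy
  have hsort : StrictMono (f ∘ Tuple.sort f) :=
    (Tuple.monotone_sort f).strictMono_of_injective (hf.comp (Equiv.injective _))
  rw [window, dif_pos h, ← hsort.lt_iff_lt]
  simp [Equiv.Perm.inv_def, f]

lemma OccursAt.eq_window {m n i : ℕ} {μ : Perm' m} {τ : Perm' n} (h : OccursAt μ τ i) :
    μ = window τ i m :=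
  h.eq_of_occursAt (window_occursAt τ h.1)

lemma window_occursAt_window {n i m j M : ℕ} (τ : Perm' n) (hji : j ≤ i) (hiM : i + m ≤ j + M)
    (hM : j + M ≤ n) : OccursAt (window τ i m) (window τ j M) (i - j) :=
  (window_occursAt τ hM).sub_of_le (window_occursAt τ (by omega)) hji hiM

lemma pLE.trans {p q r : PermS} (hpq : pLE p q) (hqr : pLE q r) : pLE p r :=
  let ⟨_, hi⟩ := hpq
  let ⟨_, hj⟩ := hqr
  ⟨_, hi.trans hj⟩

lemma pLE.eq_of_len_le {p q : PermS} (h : pLE p q) (hl : q.1 ≤ p.1) : p = q := by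
  obtain ⟨m, π⟩ := p
  obtain ⟨n, τ⟩ := q
  obtain ⟨i, hocc⟩ := h
  dsimp only at hl hocc
  obtain rfl : m = n := le_antisymm (by have := hocc.1; omega) hl
  obtain rfl : i = 0 := by have := hocc.1; omega
  rw [hocc.eq_of_occursAt (occursAt_self τ)]

lemma pLT.len_lt {p q : PermS} (h : pLT p q) : p.1 < q.1 :=
  lt_of_not_ge fun hl => h.2 (h.1.eq_of_len_le hl)

lemma pLT_of_pLE_of_len_lt {p q : PermS} (h : pLE p q) (hl : p.1 < q.1) : pLT p q :=
  ⟨h, by rintro rfl; exact hl.false⟩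

lemma pCovBy_of_pLT_of_len_eq {p q : PermS} (h : pLT p q) (hl : q.1 = p.1 + 1) : pCovBy p q :=
  ⟨h, fun _ hpr hrq => by have := hpr.len_lt; have := hrq.len_lt; omega⟩

section Interval

variable {k N : ℕ} {α : Perm' k} {β : Perm' N}

lemma window_mem_openInterval {c i m : ℕ} (hc : OccursAt α β c) (hic : i ≤ c)
    (hcm : c + k ≤ i + m) (hkm : k < m) (hmN : m < N) (hiN : i + m ≤ N) :
    (⟨m, window β i m⟩ : PermS) ∈ openInterval ⟨k, α⟩ ⟨N, β⟩ :=
  ⟨pLT_of_pLE_of_len_lt ⟨c - i, (window_occursAt β hiN).sub_of_le hc hic hcm⟩ hkm,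
    pLT_of_pLE_of_len_lt ⟨i, window_occursAt β hiN⟩ hmN⟩

lemma exists_window_of_mem_openInterval {u : PermS} (hu : u ∈ openInterval ⟨k, α⟩ ⟨N, β⟩) :
    ∃ i c, u = ⟨u.1, window β i u.1⟩ ∧ i + u.1 ≤ N ∧ OccursAt α β c ∧ i ≤ c ∧
      c + k ≤ i + u.1 := by
  obtain ⟨i, hi⟩ := hu.2.1
  obtain ⟨q, hq⟩ := hu.1.1
  have : q + k ≤ u.1 := hq.1
  exact ⟨i, i + q, Sigma.ext rfl (heq_of_eq hi.eq_window), hi.1, hq.trans hi, by omega, by omega⟩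

lemma hasse_adj_of_pLT_of_len_eq {p q : PermS} {x y : openInterval p q} (h : pLT x.1 y.1)
    (hl : y.1.1 = x.1.1 + 1) : (hasse p q).Adj x y := by
  rw [hasse, SimpleGraph.fromRel_adj]
  exact ⟨fun hxy => h.2 (congrArg Subtype.val hxy), Or.inl (pCovBy_of_pLT_of_len_eq h hl)⟩

lemma hasse_reachable_of_window_le {x y : openInterval ⟨k, α⟩ ⟨N, β⟩} {i m j M : ℕ}
    (hx : x.1 = ⟨m, window β i m⟩) (hy : y.1 = ⟨M, window β j M⟩) (hji : j ≤ i)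
    (hiM : i + m ≤ j + M) (hM : j + M ≤ N) : (hasse ⟨k, α⟩ ⟨N, β⟩).Reachable x y := by
  induction hd : M - m generalizing i m x with
  | zero =>
    obtain rfl : i = j := by omega
    obtain rfl : m = M := by omega
    rw [Subtype.ext (hx.trans hy.symm)]
  | succ d ih =>
    set i' := if j < i then i - 1 else i
    obtain ⟨hji', hi'i, hgrow, hfit⟩ :
        j ≤ i' ∧ i' ≤ i ∧ i + m ≤ i' + (m + 1) ∧ i' + (m + 1) ≤ j + M := by
      simp only [i']; split_ifs <;> omega
    have hxz : pLE ⟨m, window β i m⟩ ⟨m + 1, window β i' (m + 1)⟩ :=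
      ⟨_, window_occursAt_window β hi'i hgrow (show i' + (m + 1) ≤ N by omega)⟩
    have hkm : k < m := by simpa [hx] using x.2.1.len_lt
    have hMN : M < N := by simpa [hy] using y.2.2.len_lt
    let z : openInterval ⟨k, α⟩ ⟨N, β⟩ := ⟨⟨m + 1, window β i' (m + 1)⟩,
      pLT_of_pLE_of_len_lt ((hx ▸ x.2.1.1 : pLE _ _).trans hxz) (show k < m + 1 by omega),
      pLT_of_pLE_of_len_lt ⟨i', window_occursAt β (show i' + (m + 1) ≤ N by omega)⟩
        (show m + 1 < N by omega)⟩
    have hadj : (hasse ⟨k, α⟩ ⟨N, β⟩).Adj x z := hasse_adj_of_pLT_of_len_eq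
      (by rw [hx]; exact pLT_of_pLE_of_len_lt hxz (show m < m + 1 by omega)) (by rw [hx])
    exact hadj.reachable.trans (ih (x := z) rfl hji' hfit (by omega))

lemma hasse_connected_of_occursAt_interior {c : ℕ} (hc : OccursAt α β c) (hc0 : 0 < c)
    (hcN : c + k < N) (hkN : k + 3 ≤ N) : (hasse ⟨k, α⟩ ⟨N, β⟩).Connected := by
  let P : openInterval ⟨k, α⟩ ⟨N, β⟩ :=
    ⟨_, window_mem_openInterval (i := 0) (m := N - 1) hc (by omega) (by omega) (by omega)
      (by omega) (by omega)⟩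
  let S : openInterval ⟨k, α⟩ ⟨N, β⟩ :=
    ⟨_, window_mem_openInterval (i := 1) (m := N - 1) hc (by omega) (by omega) (by omega)
      (by omega) (by omega)⟩
  let Q : openInterval ⟨k, α⟩ ⟨N, β⟩ :=
    ⟨_, window_mem_openInterval (i := 1) (m := N - 2) hc (by omega) (by omega) (by omega)
      (by omega) (by omega)⟩
  have hQP : (hasse _ _).Reachable Q P :=
    hasse_reachable_of_window_le rfl rfl (by omega) (by omega) (by omega)
  have hQS : (hasse _ _).Reachable Q S :=
    hasse_reachable_of_window_le rfl rfl (by omega) (by omega) (by omega)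
  refine (SimpleGraph.connected_iff_exists_forall_reachable _).2 ⟨P, fun x => ?_⟩
  obtain ⟨i, -, hx, hiN, -⟩ := exists_window_of_mem_openInterval x.2
  have hxN : x.1.1 < N := x.2.2.len_lt
  rcases Nat.lt_or_ge (i + x.1.1) N with h | h
  · exact (hasse_reachable_of_window_le hx rfl (Nat.zero_le i) (by omega) (by omega)).symm
  · exact hQP.symm.trans <| hQS.trans
      (hasse_reachable_of_window_le hx rfl (by omega) (by omega) (by omega)).symm

lemma hasse_connected_of_forall_occursAt_eq_zero (h0 : OccursAt α β 0)
    (honly : ∀ c, OccursAt α β c → c = 0) (hkN : k + 2 ≤ N) :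
    (hasse ⟨k, α⟩ ⟨N, β⟩).Connected := by
  let P : openInterval ⟨k, α⟩ ⟨N, β⟩ :=
    ⟨_, window_mem_openInterval (i := 0) (m := N - 1) h0 (by omega) (by omega) (by omega)
      (by omega) (by omega)⟩
  refine (SimpleGraph.connected_iff_exists_forall_reachable _).2 ⟨P, fun x => ?_⟩
  obtain ⟨i, c, hx, -, hc, hic, -⟩ := exists_window_of_mem_openInterval x.2
  have hxN : x.1.1 < N := x.2.2.len_lt
  have := honly c hc
  exact (hasse_reachable_of_window_le hx rfl (Nat.zero_le i) (by omega) (by omega)).symm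

lemma hasse_connected_of_forall_occursAt_eq_sub (hN : OccursAt α β (N - k))
    (honly : ∀ c, OccursAt α β c → c = N - k) (hkN : k + 2 ≤ N) :
    (hasse ⟨k, α⟩ ⟨N, β⟩).Connected := by
  let S : openInterval ⟨k, α⟩ ⟨N, β⟩ :=
    ⟨_, window_mem_openInterval (i := 1) (m := N - 1) hN (by omega) (by omega) (by omega)
      (by omega) (by omega)⟩
  refine (SimpleGraph.connected_iff_exists_forall_reachable _).2 ⟨S, fun x => ?_⟩
  obtain ⟨i, c, hx, hiN, hc, -, hci⟩ := exists_window_of_mem_openInterval x.2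
  have hxN : x.1.1 < N := x.2.2.len_lt
  have := honly c hc
  exact (hasse_reachable_of_window_le hx rfl (by omega) (by omega) (by omega)).symm

lemma straddles_of_intervalDisconnected (hle : pLE ⟨k, α⟩ ⟨N, β⟩) (hkN : k + 3 ≤ N)
    (hd : IntervalDisconnected ⟨k, α⟩ ⟨N, β⟩) : Straddles ⟨k, α⟩ ⟨N, β⟩ := by
  have hends : ∀ c, OccursAt α β c → c = 0 ∨ c = N - k := fun c hc => by
    have := hc.1
    by_contra! h
    exact hd (hasse_connected_of_occursAt_interior hc (by omega) (by omega) hkN)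
  obtain ⟨c, hc⟩ := hle
  have h0 : OccursAt α β 0 := by
    by_contra h0
    have honly c' (hc' : OccursAt α β c') : c' = N - k :=
      (hends c' hc').resolve_left (by rintro rfl; exact h0 hc')
    exact hd (hasse_connected_of_forall_occursAt_eq_sub (honly c hc ▸ hc) honly (by omega))
  have hN : OccursAt α β (N - k) := by
    by_contra hN
    have honly c' (hc' : OccursAt α β c') : c' = 0 :=
      (hends c' hc').resolve_right (by rintro rfl; exact hN hc')
    exact hd (hasse_connected_of_forall_occursAt_eq_zero h0 honly (by omega))
  exact ⟨pLT_of_pLE_of_len_lt ⟨c, hc⟩ (show k < N by omega), h0, hN, hends⟩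

lemma Straddles.occursAt_eq_zero_or_eq_sub (hs : Straddles ⟨k, α⟩ ⟨N, β⟩) {u : PermS}
    (hu : u ∈ openInterval ⟨k, α⟩ ⟨N, β⟩) {c : ℕ} (hc : OccursAt u.2 β c) :
    c = 0 ∨ c = N - u.1 := by
  have hends : ∀ c, OccursAt α β c → c = 0 ∨ c = N - k := hs.2.2.2
  obtain ⟨q, hq⟩ := hu.1.1
  have : q + k ≤ u.1 := hq.1
  have : c + u.1 ≤ N := hc.1
  rcases hends _ (hq.trans hc) with h | h
  · left; omega
  · right; omega

lemma Straddles.not_occursAt_sub_of_occursAt_zero (hs : Straddles ⟨k, α⟩ ⟨N, β⟩) {u : PermS}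
    (hu : u ∈ openInterval ⟨k, α⟩ ⟨N, β⟩) (h0 : OccursAt u.2 β 0) :
    ¬ OccursAt u.2 β (N - u.1) := by
  intro hN
  have hends : ∀ c, OccursAt α β c → c = 0 ∨ c = N - k := hs.2.2.2
  obtain ⟨q, hq⟩ := hu.1.1
  have : q + k ≤ u.1 := hq.1
  have : k < u.1 := hu.1.len_lt
  have : u.1 < N := hu.2.len_lt
  rcases hends _ (hq.trans h0) with h | h <;> rcases hends _ (hq.trans hN) with h' | h' <;> omega

lemma Straddles.occursAt_zero_iff_of_pLE (hs : Straddles ⟨k, α⟩ ⟨N, β⟩) {u v : PermS}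
    (hu : u ∈ openInterval ⟨k, α⟩ ⟨N, β⟩) (hv : v ∈ openInterval ⟨k, α⟩ ⟨N, β⟩)
    (huv : pLE u v) : OccursAt u.2 β 0 ↔ OccursAt v.2 β 0 := by
  obtain ⟨p, hp⟩ := huv
  have : p + u.1 ≤ v.1 := hp.1
  have : v.1 < N := hv.2.len_lt
  constructor
  · intro hu0
    by_contra hv0
    obtain ⟨c, hc⟩ := hv.2.1
    have hvN : OccursAt v.2 β (N - v.1) :=
      (hs.occursAt_eq_zero_or_eq_sub hv hc).resolve_left (by rintro rfl; exact hv0 hc) ▸ hc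
    rcases hs.occursAt_eq_zero_or_eq_sub hu (hp.trans hvN) with h | h
    · omega
    · exact hs.not_occursAt_sub_of_occursAt_zero hu hu0 (h ▸ hp.trans hvN)
  · intro hv0
    rcases hs.occursAt_eq_zero_or_eq_sub hu (hp.trans hv0) with h | h
    · exact h ▸ hp.trans hv0
    · omega

lemma Straddles.occursAt_zero_iff_of_hasse_adj (hs : Straddles ⟨k, α⟩ ⟨N, β⟩)
    {x y : openInterval ⟨k, α⟩ ⟨N, β⟩} (h : (hasse ⟨k, α⟩ ⟨N, β⟩).Adj x y) :
    OccursAt x.1.2 β 0 ↔ OccursAt y.1.2 β 0 := by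
  rw [hasse, SimpleGraph.fromRel_adj] at h
  rcases h.2 with hxy | hyx
  · exact hs.occursAt_zero_iff_of_pLE x.2 y.2 hxy.1.1
  · exact (hs.occursAt_zero_iff_of_pLE y.2 x.2 hyx.1.1).symm

lemma Straddles.intervalDisconnected (hs : Straddles ⟨k, α⟩ ⟨N, β⟩) (hkN : k + 2 ≤ N) :
    IntervalDisconnected ⟨k, α⟩ ⟨N, β⟩ := by
  intro hconn
  let L : openInterval ⟨k, α⟩ ⟨N, β⟩ :=
    ⟨_, window_mem_openInterval (i := 0) (m := k + 1) hs.2.1 (by omega) (by omega) (by omega)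
      (by omega) (by omega)⟩
  let R : openInterval ⟨k, α⟩ ⟨N, β⟩ :=
    ⟨_, window_mem_openInterval (c := N - k) (i := N - (k + 1)) (m := k + 1) hs.2.2.1
      (by omega) (by omega) (by omega) (by omega) (by omega)⟩
  have hLR := (hconn.preconnected L R).iff_of_forall_adj
    fun _ _ => hs.occursAt_zero_iff_of_hasse_adj
  exact hs.not_occursAt_sub_of_occursAt_zero R.2
    (hLR.1 (window_occursAt (i := 0) (m := k + 1) β (by omega)))
    (window_occursAt (i := N - (k + 1)) (m := k + 1) β (by omega))

end Interval

lemma Straddles.occursAt_adjacent {k N n t : ℕ} {α : Perm' k} {β : Perm' N} {τ : Perm' n}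
    (hs : Straddles ⟨k, α⟩ ⟨N, β⟩) (ht : OccursAt β τ t) :
    OccursAt α τ t ∧ OccursAt α τ (t + (N - k)) ∧
      ∀ c, t < c → c < t + (N - k) → ¬ OccursAt α τ c := by
  refine ⟨hs.2.1.trans ht, hs.2.2.1.trans ht, fun c htc hcN hc => ?_⟩
  have hends : ∀ c, OccursAt α β c → c = 0 ∨ c = N - k := hs.2.2.2
  have : k < N := hs.1.len_lt
  rcases hends _ (ht.sub_of_le hc htc.le (by omega)) with h | h <;> omega

lemma straddles_window_of_adjacent {k n a b : ℕ} {π : Perm' k} {τ : Perm' n}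
    (ha : OccursAt π τ a) (hb : OccursAt π τ b) (hab : a < b)
    (hadj : ∀ c, a < c → c < b → ¬ OccursAt π τ c) :
    Straddles ⟨k, π⟩ ⟨b - a + k, window τ a (b - a + k)⟩ := by
  have hbn : b + k ≤ n := hb.1
  have hw : OccursAt (window τ a (b - a + k)) τ a := window_occursAt τ (by omega)
  have h0 : OccursAt π (window τ a (b - a + k)) 0 := by
    simpa using hw.sub_of_le ha le_rfl (by omega)
  refine ⟨pLT_of_pLE_of_len_lt ⟨0, h0⟩ (show k < b - a + k by omega), h0, ?_, fun c hc => ?_⟩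
  · simpa using hw.sub_of_le hb hab.le (by omega)
  · have : c + k ≤ b - a + k := hc.1
    rcases Nat.eq_zero_or_pos c with rfl | hc0
    · exact Or.inl rfl
    · refine Or.inr (show c = b - a + k - k from ?_)
      by_contra hne
      exact hadj (a + c) (by omega) (by omega) (hc.trans hw)

theorem stmt4_general {m n : ℕ} (σ : Perm' m) (τ : Perm' n) :
    (HasNontrivDisconSub ⟨m, σ⟩ ⟨n, τ⟩ ↔
      ∃ (k : ℕ) (π : Perm' k) (a b : ℕ), pLE ⟨m, σ⟩ ⟨k, π⟩ ∧ pLE ⟨k, π⟩ ⟨n, τ⟩ ∧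
        OccursAt π τ a ∧ OccursAt π τ b ∧ a + 3 ≤ b ∧
        ∀ c, a < c → c < b → ¬ OccursAt π τ c) ∧
    (∀ (k : ℕ) (π : Perm' k) (a b : ℕ), pLE ⟨m, σ⟩ ⟨k, π⟩ → pLE ⟨k, π⟩ ⟨n, τ⟩ →
        OccursAt π τ a → OccursAt π τ b → a + 3 ≤ b →
        (∀ c, a < c → c < b → ¬ OccursAt π τ c) →
        IntervalDisconnected ⟨k, π⟩ ⟨b - a + k, window τ a (b - a + k)⟩) := by
  refine ⟨⟨?_, ?_⟩, fun k π a b _ _ ha hb hab hadj =>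
    (straddles_window_of_adjacent ha hb (by omega) hadj).intervalDisconnected (by omega)⟩
  · rintro ⟨⟨k, α⟩, ⟨N, β⟩, hσα, hαβ, ⟨t, ht⟩, hkN, hd⟩
    change k + 3 ≤ N at hkN
    obtain ⟨hta, htb, hadj⟩ := (straddles_of_intervalDisconnected hαβ hkN hd).occursAt_adjacent ht
    exact ⟨k, α, t, t + (N - k), hσα, hαβ.trans ⟨t, ht⟩, hta, htb, by omega, hadj⟩
  · rintro ⟨k, π, a, b, hσπ, -, ha, hb, hab, hadj⟩
    have hbn : b + k ≤ n := hb.1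
    have hs := straddles_window_of_adjacent ha hb (by omega) hadj
    exact ⟨_, _, hσπ, hs.1.1, ⟨a, window_occursAt (m := b - a + k) τ (by omega)⟩,
      show k + 3 ≤ b - a + k by omega, hs.intervalDisconnected (by omega)⟩

/-- Corollary 3.3: `[σ,τ]` contains a non-trivial disconnected
subinterval iff some `π ∈ [σ,τ]` has two adjacent occurrences in `τ` offset by at least 3
positions; moreover, for two such adjacent occurrences starting at positions `a < b`, the
subinterval `[π, τ[a, b + |π| - 1]]` (0-indexed window of length `b - a + |π|` starting at
`a`) is disconnected. -/
theorem stmt4 {m n : ℕ} (hm : 1 ≤ m) (σ : Perm' m) (τ : Perm' n) (hle : PattLE σ τ) :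
    (HasNontrivDisconSub ⟨m, σ⟩ ⟨n, τ⟩ ↔
      ∃ (k : ℕ) (π : Perm' k) (a b : ℕ), pLE ⟨m, σ⟩ ⟨k, π⟩ ∧ pLE ⟨k, π⟩ ⟨n, τ⟩ ∧
        OccursAt π τ a ∧ OccursAt π τ b ∧ a + 3 ≤ b ∧
        ∀ c, a < c → c < b → ¬ OccursAt π τ c) ∧
    (∀ (k : ℕ) (π : Perm' k) (a b : ℕ), pLE ⟨m, σ⟩ ⟨k, π⟩ → pLE ⟨k, π⟩ ⟨n, τ⟩ →
        OccursAt π τ a → OccursAt π τ b → a + 3 ≤ b →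
        (∀ c, a < c → c < b → ¬ OccursAt π τ c) →
        IntervalDisconnected ⟨k, π⟩ ⟨b - a + k, window τ a (b - a + k)⟩) :=
  stmt4_general σ τ
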